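/- Let Q = R^n, M = T*Q × R = R^{2n+1} with coordinates (q,p,u), and Λ = (∂_{q^i} + p_i ∂_u) ∧ ∂_{p_i} the canonical contact bivector. Let S: Q → R be smooth and j¹S∘π_Q: M → M, (q,p,u) ↦ (q, dS(q), S(q)). Then for any smooth function f: M → R and 1-form α = α_i dq^i + α^i dp_i + α_0 du on M, one has Λ((j¹S∘π_Q)*α − α|_{j¹S}, df) = Σ_i α^i|_{j¹S} · ∂_{q^i}[f(q, dS(q), S(q))]. -/

import Mathlib

/-- `ℝ^{2n+1} = T*Q × ℝ` with coordinates `(q, p, u)`, `Q = ℝ^n`. -/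
abbrev Cn (n : ℕ) : Type := (Fin n → ℝ) × (Fin n → ℝ) × ℝ

/-- The canonical contact bivector `Λ = Σ_i (∂_{q^i} + p_i ∂_u) ∧ ∂_{p_i}`,
acting on two covectors (given as real-valued functions on tangent vectors). -/
def contactBivector (n : ℕ) (x : Cn n) (α β : Cn n → ℝ) : ℝ :=
  ∑ i : Fin n,
    (α ((Pi.single i 1, 0, x.2.1 i) : Cn n) * β ((0, Pi.single i 1, 0) : Cn n)
      - α ((0, Pi.single i 1, 0) : Cn n) * β ((Pi.single i 1, 0, x.2.1 i) : Cn n))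

/-- The map `j¹S ∘ π_Q : M → M`, `(q,p,u) ↦ (q, dS(q), S(q))`. -/
noncomputable def jetProj (n : ℕ) (S : (Fin n → ℝ) → ℝ) (z : Cn n) : Cn n :=
  (z.1, fun i => fderiv ℝ S z.1 (Pi.single i 1), S z.1)

/-- The 1-jet `j¹S : Q → M`. -/
noncomputable def jet1 (n : ℕ) (S : (Fin n → ℝ) → ℝ) (q : Fin n → ℝ) : Cn n :=
  (q, fun i => fderiv ℝ S q (Pi.single i 1), S q)

/-- The 1-form `α = α_i dq^i + α^i dp_i + α_0 du` with coefficient functions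
`a i`, `aup i`, `a0`, evaluated at the point `y` on a tangent vector `w`. -/
def oneForm (n : ℕ) (a aup : Fin n → Cn n → ℝ) (a0 : Cn n → ℝ)
    (y w : Cn n) : ℝ :=
  (∑ i, a i y * w.1 i) + (∑ i, aup i y * w.2.1 i) + a0 y * w.2.2

/-- Evaluation of a continuous linear functional on covectors at the basis. -/
noncomputable def Emap (n : ℕ) : ((Fin n → ℝ) →L[ℝ] ℝ) →L[ℝ] (Fin n → ℝ) :=
  ContinuousLinearMap.pi (fun i => ContinuousLinearMap.apply ℝ ℝ (Pi.single i 1))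

lemma clm_pi_expand {n : ℕ} (φ : (Fin n → ℝ) →L[ℝ] ℝ) (v : Fin n → ℝ) :
    φ v = ∑ j, v j * φ (Pi.single j 1) := by
  have h := (φ : (Fin n → ℝ) →ₗ[ℝ] ℝ).pi_apply_eq_sum_univ v
  simp only [smul_eq_mul] at h
  refine Eq.trans h (Finset.sum_congr rfl fun i _ => ?_)
  have hh : (fun j => if i = j then (1:ℝ) else 0) = Pi.single i 1 := by
    ext j; simp [Pi.single_apply, eq_comm]
  rw [hh]; rfl


/-- Lemma 4.4(ii) in coordinates: for any smooth `f` and 1-form `α`,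
`Λ((j¹S∘π_Q)*α − α|_{j¹S}, df) = Σ_i α^i|_{j¹S} · ∂_{q^i}[f(q, dS(q), S(q))]`
(evaluated along the 1-jet of `S`). -/
theorem contact_bivector_jet_identity (n : ℕ) (S : (Fin n → ℝ) → ℝ)
    (hS : ContDiff ℝ (⊤ : ℕ∞) S) (f : Cn n → ℝ) (hf : ContDiff ℝ (⊤ : ℕ∞) f)
    (a aup : Fin n → Cn n → ℝ) (a0 : Cn n → ℝ) :
    ∀ q : Fin n → ℝ,
      contactBivector n (jet1 n S q)
        (fun w => oneForm n a aup a0 (jetProj n S (jet1 n S q))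
            (fderiv ℝ (jetProj n S) (jet1 n S q) w)
          - oneForm n a aup a0 (jetProj n S (jet1 n S q)) w)
        (fun w => fderiv ℝ f (jet1 n S q) w)
      = ∑ i, aup i (jetProj n S (jet1 n S q)) *
          fderiv ℝ (fun q' => f (jet1 n S q')) q (Pi.single i 1) := by
  intro q
  have hSdiff : Differentiable ℝ S := hS.differentiable (by simp)
  have hfd : ContDiff ℝ (⊤ : ℕ∞) (fderiv ℝ S) := hS.fderiv_right (by simp)
  have hD2 : HasFDerivAt (fderiv ℝ S) (fderiv ℝ (fderiv ℝ S) q) q :=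
    (hfd.differentiable (by simp) q).hasFDerivAt
  set DS : (Fin n → ℝ) →L[ℝ] ℝ := fderiv ℝ S q with hDSdef
  set D2 : (Fin n → ℝ) →L[ℝ] (Fin n → ℝ) →L[ℝ] ℝ := fderiv ℝ (fderiv ℝ S) q with hD2def
  have hsymm : ∀ v w, D2 v w = D2 w v :=
    second_derivative_symmetric (fun y => (hSdiff y).hasFDerivAt) hD2
  have hg : HasFDerivAt (fun q' => (fun i => fderiv ℝ S q' (Pi.single i 1) : Fin n → ℝ))
      ((Emap n).comp D2) q := (Emap n).hasFDerivAt.comp q hD2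
  set x : Cn n := jet1 n S q with hxdef
  set LJ : Cn n →L[ℝ] Cn n :=
    (ContinuousLinearMap.fst ℝ (Fin n → ℝ) ((Fin n → ℝ) × ℝ)).prod
      ((((Emap n).comp D2).comp (ContinuousLinearMap.fst ℝ (Fin n → ℝ) ((Fin n → ℝ) × ℝ))).prod
        (DS.comp (ContinuousLinearMap.fst ℝ (Fin n → ℝ) ((Fin n → ℝ) × ℝ)))) with hLJdef
  have hJP : HasFDerivAt (jetProj n S) LJ x := by
    have h1 := hg.comp (f := Prod.fst) x (hasFDerivAt_fst (p := x))
    have h2 := ((hSdiff q).hasFDerivAt).comp (f := Prod.fst) x (hasFDerivAt_fst (p := x))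
    exact HasFDerivAt.prodMk hasFDerivAt_fst
      (HasFDerivAt.prodMk h1 h2)
  set L1 : (Fin n → ℝ) →L[ℝ] Cn n :=
    (ContinuousLinearMap.id ℝ (Fin n → ℝ)).prod ((((Emap n).comp D2)).prod DS) with hL1def
  have hJ1 : HasFDerivAt (jet1 n S) L1 q :=
    HasFDerivAt.prodMk (hasFDerivAt_id q) (hg.prodMk (hSdiff q).hasFDerivAt)
  have hfx : HasFDerivAt f (fderiv ℝ f x) x := (hf.differentiable (by simp) x).hasFDerivAt
  have hcomp : HasFDerivAt (fun q' => f (jet1 n S q')) ((fderiv ℝ f x).comp L1) q :=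
    hfx.comp q hJ1
  rw [hcomp.fderiv]
  simp only [contactBivector, hJP.fderiv]
  set y : Cn n := jetProj n S x with hydef
  set F := fderiv ℝ f x with hFdef
  -- key evaluations
  have e1 : ∀ i : Fin n, oneForm n a aup a0 y (LJ (Pi.single i 1, 0, x.2.1 i))
      - oneForm n a aup a0 y (Pi.single i 1, 0, x.2.1 i)
      = ∑ j, aup j y * D2 (Pi.single i 1) (Pi.single j 1) := by
    intro i
    have hx21 : x.2.1 i = DS (Pi.single i 1) := rfl
    simp [oneForm, hLJdef, Emap, hx21, ContinuousLinearMap.prod_apply]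
  have e2 : ∀ i : Fin n, oneForm n a aup a0 y (LJ ((0 : Fin n → ℝ), Pi.single i 1, 0))
      - oneForm n a aup a0 y ((0 : Fin n → ℝ), Pi.single i 1, 0) = -(aup i y) := by
    intro i
    simp [oneForm, hLJdef, Emap, Pi.single_apply, mul_ite, Finset.sum_ite_eq']
  have e3 : ∀ i : Fin n, (F.comp L1) (Pi.single i 1)
      = F (Pi.single i 1, 0, x.2.1 i)
        + ∑ j, D2 (Pi.single i 1) (Pi.single j 1) * F ((0 : Fin n → ℝ), Pi.single j 1, 0) := by
    intro i
    have hx21 : x.2.1 i = DS (Pi.single i 1) := rfl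
    have hM : (L1 (Pi.single i 1) : Cn n)
        = (Pi.single i 1, (0 : Fin n → ℝ), DS (Pi.single i 1))
          + ((0 : Fin n → ℝ), (Emap n) (D2 (Pi.single i 1)), (0 : ℝ)) := by
      simp [hL1def, Prod.ext_iff, Emap]
    have hlin : F ((0 : Fin n → ℝ), (Emap n) (D2 (Pi.single i 1)), (0 : ℝ))
        = ∑ j, D2 (Pi.single i 1) (Pi.single j 1) * F ((0 : Fin n → ℝ), Pi.single j 1, 0) := by
      set M : (Fin n → ℝ) →L[ℝ] Cn n :=
        (0 : (Fin n → ℝ) →L[ℝ] (Fin n → ℝ)).prod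
          ((ContinuousLinearMap.id ℝ (Fin n → ℝ)).prod 0) with hMdef
      have : ∀ v : Fin n → ℝ, F ((0 : Fin n → ℝ), v, (0 : ℝ)) = (F.comp M) v := by
        intro v; simp [hMdef]
      rw [this]
      rw [clm_pi_expand (F.comp M) ((Emap n) (D2 (Pi.single i 1)))]
      refine Finset.sum_congr rfl fun j _ => ?_
      rw [this]
      simp [Emap]
    rw [ContinuousLinearMap.comp_apply, hM, map_add, hlin, hx21]
  -- now pure algebra
  calc
    ∑ i : Fin n, ((oneForm n a aup a0 y (LJ (Pi.single i 1, 0, x.2.1 i))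
          - oneForm n a aup a0 y (Pi.single i 1, 0, x.2.1 i)) * F ((0 : Fin n → ℝ), Pi.single i 1, 0)
        - (oneForm n a aup a0 y (LJ ((0 : Fin n → ℝ), Pi.single i 1, 0))
          - oneForm n a aup a0 y ((0 : Fin n → ℝ), Pi.single i 1, 0)) * F (Pi.single i 1, 0, x.2.1 i))
      = ∑ i : Fin n, ((∑ j, aup j y * D2 (Pi.single i 1) (Pi.single j 1)) * F ((0 : Fin n → ℝ), Pi.single i 1, 0)
          + aup i y * F (Pi.single i 1, 0, x.2.1 i)) := by
        refine Finset.sum_congr rfl fun i _ => ?_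
        rw [e1 i, e2 i]; ring
    _ = (∑ i : Fin n, ∑ j, aup j y * D2 (Pi.single i 1) (Pi.single j 1) * F ((0 : Fin n → ℝ), Pi.single i 1, 0))
          + ∑ i : Fin n, aup i y * F (Pi.single i 1, 0, x.2.1 i) := by
        rw [Finset.sum_add_distrib]
        congr 1
        exact Finset.sum_congr rfl fun i _ => Finset.sum_mul _ _ _
    _ = (∑ i : Fin n, ∑ j, aup i y * D2 (Pi.single i 1) (Pi.single j 1) * F ((0 : Fin n → ℝ), Pi.single j 1, 0))
          + ∑ i : Fin n, aup i y * F (Pi.single i 1, 0, x.2.1 i) := by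
        congr 1
        rw [Finset.sum_comm]
        refine Finset.sum_congr rfl fun i _ => Finset.sum_congr rfl fun j _ => ?_
        rw [hsymm (Pi.single j 1) (Pi.single i 1)]
    _ = ∑ i : Fin n, aup i y * (F.comp L1) (Pi.single i 1) := by
        rw [← Finset.sum_add_distrib]
        refine Finset.sum_congr rfl fun i _ => ?_
        rw [e3 i, mul_add, Finset.mul_sum]
        rw [add_comm]
        congr 1
        exact Finset.sum_congr rfl fun j _ => by ring
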